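/- arXiv:2404.16448 — 3 statements merged into one kernel-verified Lean document; each statement's English description precedes it below -/
import Mathlib

section
/- Let (X, d) be a metric space, B ⊆ X a subset, and Γ ⊆ B a finite set of points. Let R* be a finite family of functions r : Γ → ℝ such that: (i) for every r ∈ R* there exists x ∈ X with |r(p) − d(x, p)| < 4η for all p ∈ Γ, and (ii) for every x ∈ B there exists r ∈ R* with |r(p) − d(x, p)| < 4η for all p ∈ Γ. Define D(p, q) := inf_{r ∈ R*} (r(p) + r(q)) for p, q ∈ Γ. Then |D(p, q) − d(p, q)| ≤ 8η for all p, q ∈ Γ. -/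
/-- Approximate interior distance functions determine distances on the net within `8η`. -/
theorem approx_distance_on_net {X : Type*} [MetricSpace X]
    (B : Set X) (Γ : Finset X) (hΓ : (↑Γ : Set X) ⊆ B)
    (R : Finset (X → ℝ)) (η : ℝ) (hη : 0 < η)
    (h1 : ∀ r ∈ R, ∃ x : X, ∀ p ∈ Γ, |r p - dist x p| < 4 * η)
    (h2 : ∀ x ∈ B, ∃ r ∈ R, ∀ p ∈ Γ, |r p - dist x p| < 4 * η) :
    ∀ p ∈ Γ, ∀ q ∈ Γ,
      |sInf {v : ℝ | ∃ r ∈ R, v = r p + r q} - dist p q| ≤ 8 * η := by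
  intro p hp q hq
  set S : Set ℝ := {v : ℝ | ∃ r ∈ R, v = r p + r q} with hS
  -- lower bound for every element of S
  have hlow : ∀ v ∈ S, dist p q - 8 * η ≤ v := by
    rintro v ⟨r, hr, rfl⟩
    obtain ⟨x, hx⟩ := h1 r hr
    have hxp := hx p hp
    have hxq := hx q hq
    have h1' : dist x p - 4 * η ≤ r p := by
      have := abs_lt.mp hxp; linarith [this.1]
    have h2' : dist x q - 4 * η ≤ r q := by
      have := abs_lt.mp hxq; linarith [this.1]
    have htri : dist p q ≤ dist x p + dist x q := by
      have := dist_triangle p x q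
      rw [dist_comm p x] at this
      linarith
    linarith
  -- upper bound: use r approximating distances from p
  obtain ⟨r₀, hr₀, hr₀'⟩ := h2 p (hΓ hp)
  have hmem : r₀ p + r₀ q ∈ S := ⟨r₀, hr₀, rfl⟩
  have hne : S.Nonempty := ⟨_, hmem⟩
  have hbdd : BddBelow S := ⟨dist p q - 8 * η, hlow⟩
  have hub : r₀ p + r₀ q ≤ dist p q + 8 * η := by
    have hp' := abs_lt.mp (hr₀' p hp)
    have hq' := abs_lt.mp (hr₀' q hq)
    have : dist p p = 0 := dist_self p
    linarith [hp'.2, hq'.2]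
  have h3 : sInf S ≤ dist p q + 8 * η := le_trans (csInf_le hbdd hmem) hub
  have h4 : dist p q - 8 * η ≤ sInf S := le_csInf hne hlow
  rw [abs_le]
  constructor <;> linarith
end

section
/- Let s ∈ (1, 2], and let Γ : ℝᵐ → ℝ satisfy the Zygmund estimate |Γ(z + v) + Γ(z − v) − 2Γ(z)| ≤ C₀|v|^{s−1} for all z, v, and be t-Hölder continuous with constant c₀, where 2t ≥ s − 1. Let F : ℝⁿ → ℝᵐ be L-Lipschitz and satisfy the midpoint estimate |F((x+y)/2) − (F(x)+F(y))/2| ≤ K|x − y|² for all x, y. Then there is a constant C (depending on C₀, c₀, t, s, L, K) such that for all x, y with |x − y| ≤ 1: |Γ(F(x)) + Γ(F(y)) − 2Γ(F((x+y)/2))| ≤ C|x − y|^{s−1}. -/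
/-- Composition estimate: `Γ ∘ F` satisfies a `C^{s−1}_*` Zygmund estimate when `Γ`
is Zygmund of order `s−1` and `t`-Hölder with `2t ≥ s−1`, and `F` is Lipschitz with
a quadratic midpoint estimate. -/
theorem zygmund_composition {E F' : Type*} [NormedAddCommGroup E] [NormedSpace ℝ E]
    [NormedAddCommGroup F'] [NormedSpace ℝ F']
    (s : ℝ) (hs1 : 1 < s) (hs2 : s ≤ 2)
    (Γ : F' → ℝ) (C₀ c₀ t L K : ℝ)
    (hZ : ∀ z v : F', |Γ (z + v) + Γ (z - v) - 2 * Γ z| ≤ C₀ * ‖v‖ ^ (s - 1))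
    (hHold : ∀ z z' : F', |Γ z - Γ z'| ≤ c₀ * ‖z - z'‖ ^ t)
    (ht : 2 * t ≥ s - 1) (ht0 : 0 < t)
    (F : E → F')
    (hLip : ∀ x y : E, ‖F x - F y‖ ≤ L * ‖x - y‖)
    (hmid : ∀ x y : E, ‖F (((1:ℝ)/2) • (x + y)) - ((1:ℝ)/2) • (F x + F y)‖ ≤ K * ‖x - y‖ ^ 2) :
    ∃ C : ℝ, ∀ x y : E, ‖x - y‖ ≤ 1 →
      |Γ (F x) + Γ (F y) - 2 * Γ (F (((1:ℝ)/2) • (x + y)))| ≤ C * ‖x - y‖ ^ (s - 1) := by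
  set L' := max L 0 with hL'
  set K' := max K 0 with hK'
  set C₀' := max C₀ 0 with hC₀'
  set c₀' := max c₀ 0 with hc₀'
  have hL'0 : 0 ≤ L' := le_max_right _ _
  have hK'0 : 0 ≤ K' := le_max_right _ _
  have hC₀'0 : 0 ≤ C₀' := le_max_right _ _
  have hc₀'0 : 0 ≤ c₀' := le_max_right _ _
  have hs0 : (0:ℝ) < s - 1 := by linarith
  refine ⟨C₀' * (L'/2) ^ (s-1) + 2 * (c₀' * K' ^ t), fun x y hxy => ?_⟩
  rcases eq_or_lt_of_le (norm_nonneg (x - y)) with h0 | h0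
  · -- x = y
    have hxyeq : x = y := sub_eq_zero.mp (norm_eq_zero.mp h0.symm)
    subst hxyeq
    have hmidx : ((1:ℝ)/2) • (x + x) = x := by
      rw [← two_smul ℝ x, smul_smul]; norm_num
    rw [hmidx, sub_self, norm_zero, Real.zero_rpow (ne_of_gt hs0), mul_zero]
    have : Γ (F x) + Γ (F x) - 2 * Γ (F x) = 0 := by ring
    rw [this, abs_zero]
  · set m := ((1:ℝ)/2) • (F x + F y) with hm
    set v := ((1:ℝ)/2) • (F x - F y) with hv
    have hmv1 : m + v = F x := by
      rw [hm, hv, ← smul_add]; rw [show F x + F y + (F x - F y) = (2:ℝ) • F x by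
        rw [two_smul]; abel]
      rw [smul_smul]; norm_num
    have hmv2 : m - v = F y := by
      rw [hm, hv, ← smul_sub]; rw [show F x + F y - (F x - F y) = (2:ℝ) • F y by
        rw [two_smul]; abel]
      rw [smul_smul]; norm_num
    set M := F (((1:ℝ)/2) • (x + y)) with hM
    have key : Γ (F x) + Γ (F y) - 2 * Γ M
        = (Γ (m + v) + Γ (m - v) - 2 * Γ m) + 2 * (Γ m - Γ M) := by
      rw [hmv1, hmv2]; ring
    have hnv : ‖v‖ ≤ (L'/2) * ‖x - y‖ := by
      rw [hv, norm_smul]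
      have : ‖F x - F y‖ ≤ L' * ‖x - y‖ :=
        le_trans (hLip x y) (mul_le_mul_of_nonneg_right (le_max_left _ _) (norm_nonneg _))
      calc ‖(1:ℝ)/2‖ * ‖F x - F y‖ ≤ (1/2) * (L' * ‖x - y‖) := by
            rw [Real.norm_eq_abs, abs_of_nonneg (by norm_num : (0:ℝ) ≤ 1/2)]
            exact mul_le_mul_of_nonneg_left this (by norm_num)
        _ = (L'/2) * ‖x - y‖ := by ring
    have hZb : |Γ (m + v) + Γ (m - v) - 2 * Γ m| ≤ C₀' * ((L'/2) ^ (s-1) * ‖x - y‖ ^ (s-1)) := by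
      refine le_trans (hZ m v) ?_
      have h1 : C₀ * ‖v‖ ^ (s-1) ≤ C₀' * ‖v‖ ^ (s-1) :=
        mul_le_mul_of_nonneg_right (le_max_left _ _) (Real.rpow_nonneg (norm_nonneg _) _)
      refine le_trans h1 ?_
      have h2 : ‖v‖ ^ (s-1) ≤ ((L'/2) * ‖x - y‖) ^ (s-1) :=
        Real.rpow_le_rpow (norm_nonneg _) hnv (le_of_lt hs0)
      rw [Real.mul_rpow (by positivity) (norm_nonneg _)] at h2
      exact mul_le_mul_of_nonneg_left h2 hC₀'0
    have hnmM : ‖m - M‖ ≤ K' * ‖x - y‖ ^ 2 := by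
      rw [← norm_neg, neg_sub]
      exact le_trans (hmid x y) (mul_le_mul_of_nonneg_right (le_max_left _ _) (by positivity))
    have hHb : |Γ m - Γ M| ≤ c₀' * (K' ^ t * ‖x - y‖ ^ (s-1)) := by
      refine le_trans (hHold m M) ?_
      have h1 : c₀ * ‖m - M‖ ^ t ≤ c₀' * ‖m - M‖ ^ t :=
        mul_le_mul_of_nonneg_right (le_max_left _ _) (Real.rpow_nonneg (norm_nonneg _) _)
      refine le_trans h1 ?_
      have h2 : ‖m - M‖ ^ t ≤ (K' * ‖x - y‖ ^ 2) ^ t :=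
        Real.rpow_le_rpow (norm_nonneg _) hnmM (le_of_lt ht0)
      have h3 : (K' * ‖x - y‖ ^ 2) ^ t = K' ^ t * ‖x - y‖ ^ (2 * t) := by
        rw [Real.mul_rpow hK'0 (by positivity)]
        congr 1
        rw [← Real.rpow_natCast ‖x - y‖ 2, ← Real.rpow_mul (norm_nonneg _)]
        norm_num
      have h4 : ‖x - y‖ ^ (2 * t) ≤ ‖x - y‖ ^ (s - 1) :=
        Real.rpow_le_rpow_of_exponent_ge h0 hxy ht
      refine mul_le_mul_of_nonneg_left ?_ hc₀'0
      rw [h3] at h2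
      exact le_trans h2 (mul_le_mul_of_nonneg_left h4 (Real.rpow_nonneg hK'0 _))
    calc |Γ (F x) + Γ (F y) - 2 * Γ M|
        ≤ |Γ (m + v) + Γ (m - v) - 2 * Γ m| + 2 * |Γ m - Γ M| := by
          rw [key]
          refine le_trans (abs_add_le _ _) ?_
          rw [abs_mul, abs_two]
      _ ≤ C₀' * ((L'/2) ^ (s-1) * ‖x - y‖ ^ (s-1)) + 2 * (c₀' * (K' ^ t * ‖x - y‖ ^ (s-1))) := by
          have := mul_le_mul_of_nonneg_left hHb (by norm_num : (0:ℝ) ≤ 2)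
          linarith [hZb]
      _ = (C₀' * (L'/2) ^ (s-1) + 2 * (c₀' * K' ^ t)) * ‖x - y‖ ^ (s-1) := by ring
end

section
/- Let G : ℝᵖ → ℝⁿ satisfy, for some bounded map A : ℝᵖ → Hom(ℝᵖ, ℝⁿ) with ‖A(g)‖ ≤ M, the expansion |G(g + h) − G(g) − A(g)h| ≤ C₁|h|^{3/2} for all g, h with |h| ≤ 1. Let f : ℝⁿ → ℝ be (2/3)-Hölder continuous with constant c₀ and satisfy the Zygmund estimate |f(z + v) + f(z − v) − 2f(z)| ≤ C₀|v| for all z, v. Then there is a constant C' (depending on M, C₀, C₁, c₀) such that for all g and all |h| ≤ 1: |f(G(g + h)) + f(G(g − h)) − 2f(G(g))| ≤ C'|h|. -/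
/-!
Write `G (g ± h) = G g ± A g h + e±` with `‖e±‖ ≤ C₁ ‖h‖^{3/2}`. The `2/3`-Hölder continuity of `f`
turns the errors into `O((‖h‖^{3/2})^{2/3}) = O(‖h‖)`, and what is left is the symmetric second
difference of `f` at `G g` with step `A g h`, which the Zygmund estimate bounds by `C₀ M ‖h‖`.
-/

open Real

lemma abs_sub_le_of_holder_of_norm_sub_le {N : Type*} [SeminormedAddCommGroup N] {f : N → ℝ}
    {c α β C t : ℝ} (hα : 0 ≤ α) (hβα : β * α = 1)
    (hf : ∀ z z' : N, |f z - f z'| ≤ c * ‖z - z'‖ ^ α) (ht : 0 ≤ t) {z z' : N}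
    (hzz' : ‖z - z'‖ ≤ C * t ^ β) :
    |f z - f z'| ≤ |c| * |C| ^ α * t :=
  calc |f z - f z'| ≤ c * ‖z - z'‖ ^ α := hf z z'
    _ ≤ |c| * (|C| * t ^ β) ^ α := by
        gcongr
        · exact le_abs_self c
        · exact hzz'.trans (by gcongr; exact le_abs_self C)
    _ = |c| * |C| ^ α * t := by
        rw [mul_rpow (abs_nonneg C) (rpow_nonneg ht _), ← rpow_mul ht, hβα, rpow_one,
          mul_assoc]

section Expansion

variable {P N : Type*} [NormedAddCommGroup P] [NormedSpace ℝ P] [NormedAddCommGroup N]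
  [NormedSpace ℝ N] {G : P → N} {A : P → P →L[ℝ] N} {C β : ℝ}

lemma norm_map_add_sub_le_of_expansion
    (hexp : ∀ g h : P, ‖h‖ ≤ 1 → ‖G (g + h) - G g - A g h‖ ≤ C * ‖h‖ ^ β)
    (g : P) {h : P} (hh : ‖h‖ ≤ 1) : ‖G (g + h) - (G g + A g h)‖ ≤ C * ‖h‖ ^ β := by
  simpa only [sub_add_eq_sub_sub] using hexp g h hh

lemma norm_map_sub_sub_le_of_expansion
    (hexp : ∀ g h : P, ‖h‖ ≤ 1 → ‖G (g + h) - G g - A g h‖ ≤ C * ‖h‖ ^ β)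
    (g : P) {h : P} (hh : ‖h‖ ≤ 1) : ‖G (g - h) - (G g - A g h)‖ ≤ C * ‖h‖ ^ β := by
  have := hexp g (-h) (by rwa [norm_neg])
  rwa [map_neg, norm_neg, ← sub_eq_add_neg, sub_neg_eq_add, sub_add] at this

end Expansion

lemma abs_second_diff_le_add {N : Type*} (F : N → ℝ) (a b a' b' z : N) :
    |F a + F b - 2 * F z| ≤ |F a - F a'| + |F b - F b'| + |F a' + F b' - 2 * F z| :=
  calc |F a + F b - 2 * F z|
      = |(F a - F a') + (F b - F b') + (F a' + F b' - 2 * F z)| := by ring_nf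
    _ ≤ _ := abs_add_three _ _ _

/-- Key computation for the group-direction derivative of an isometric action:
`f ∘ G` satisfies a `C¹_*` Zygmund estimate. -/
theorem zygmund_of_composition_with_expansion {P N : Type*}
    [NormedAddCommGroup P] [NormedSpace ℝ P] [NormedAddCommGroup N] [NormedSpace ℝ N]
    (G : P → N) (A : P → (P →L[ℝ] N)) (M C₀ C₁ c₀ : ℝ)
    (hA : ∀ g : P, ‖A g‖ ≤ M)
    (hexp : ∀ g h : P, ‖h‖ ≤ 1 → ‖G (g + h) - G g - A g h‖ ≤ C₁ * ‖h‖ ^ ((3:ℝ)/2))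
    (f : N → ℝ)
    (hHold : ∀ z z' : N, |f z - f z'| ≤ c₀ * ‖z - z'‖ ^ ((2:ℝ)/3))
    (hZ : ∀ z v : N, |f (z + v) + f (z - v) - 2 * f z| ≤ C₀ * ‖v‖) :
    ∃ C' : ℝ, ∀ g h : P, ‖h‖ ≤ 1 →
      |f (G (g + h)) + f (G (g - h)) - 2 * f (G g)| ≤ C' * ‖h‖ := by
  refine ⟨2 * (|c₀| * |C₁| ^ ((2:ℝ)/3)) + |C₀| * M, fun g h hh => ?_⟩
  have hplus := abs_sub_le_of_holder_of_norm_sub_le (by norm_num) (by norm_num) hHold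
    (norm_nonneg h) (norm_map_add_sub_le_of_expansion hexp g hh)
  have hminus := abs_sub_le_of_holder_of_norm_sub_le (by norm_num) (by norm_num) hHold
    (norm_nonneg h) (norm_map_sub_sub_le_of_expansion hexp g hh)
  have hzyg : |f (G g + A g h) + f (G g - A g h) - 2 * f (G g)| ≤ |C₀| * (M * ‖h‖) :=
    (hZ _ _).trans <| mul_le_mul (le_abs_self C₀) ((A g).le_of_opNorm_le (hA g) h)
      (norm_nonneg _) (abs_nonneg C₀)
  linarith [abs_second_diff_le_add f (G (g + h)) (G (g - h)) (G g + A g h) (G g - A g h) (G g)]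
end
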